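/- arXiv:2410.23720 — 2 statements merged into one kernel-verified Lean document; each statement's English description precedes it below -/
import Mathlib

section
/- Let 1 ≤ i ≤ n-2 and let E be an i-dimensional subspace of R^n such that neither ē ∈ E nor E ⊆ ē^⊥, where ē is a fixed unit vector. Set t_E = max{⟨v, ē⟩ : v ∈ E, |v| = 1} ∈ (0,1). If η ∈ SO(n) is such that η(H ∩ S^{n-1}) ∩ (H ∩ S^{n-1}) ≠ ∅, where H = {x : ⟨x, ē⟩ = t_E}, then there exists an i-dimensional subspace G such that E, G, and η^{-1}G all lie in the same orbit under the subgroup of SO(n) stabilizing ē. -/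
open MeasureTheory Metric Set Filter
open scoped ENNReal NNReal Pointwise
noncomputable section

/-- Euclidean space ℝ^n. -/
abbrev Euc (n : ℕ) := EuclideanSpace ℝ (Fin n)

/-- The rotation group SO(n), modeled as the subgroup of linear isometries of ℝ^n
with determinant one. -/
def rotGroup (n : ℕ) : Subgroup (Euc n ≃ₗᵢ[ℝ] Euc n) where
  carrier := {f | LinearMap.det (f.toLinearEquiv : Euc n →ₗ[ℝ] Euc n) = 1}
  one_mem' := by
    have : ((1 : Euc n ≃ₗᵢ[ℝ] Euc n).toLinearEquiv : Euc n →ₗ[ℝ] Euc n) = LinearMap.id := by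
      ext x; simp
    simp only [Set.mem_setOf_eq, this, LinearMap.det_id]
  mul_mem' := by
    intro a b ha hb
    have : ((a * b).toLinearEquiv : Euc n →ₗ[ℝ] Euc n)
        = (a.toLinearEquiv : Euc n →ₗ[ℝ] Euc n) * (b.toLinearEquiv : Euc n →ₗ[ℝ] Euc n) := by
      ext x; simp [LinearIsometryEquiv.coe_mul]
    simp only [Set.mem_setOf_eq] at *
    rw [this, map_mul, ha, hb, mul_one]
  inv_mem' := by
    intro a ha
    have h : ((a⁻¹).toLinearEquiv : Euc n →ₗ[ℝ] Euc n) * (a.toLinearEquiv : Euc n →ₗ[ℝ] Euc n)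
        = LinearMap.id := by
      ext x; simp
    simp only [Set.mem_setOf_eq] at *
    have := congrArg LinearMap.det h
    rw [map_mul, ha, mul_one, LinearMap.det_id] at this
    exact this

/-- Elements of SO(n). -/
abbrev Rot (n : ℕ) := rotGroup n

/-- The action of a rotation on subspaces of ℝ^n. -/
def rotSub {n : ℕ} (g : Rot n) (E : Submodule ℝ (Euc n)) : Submodule ℝ (Euc n) :=
  E.map (g.1.toLinearEquiv : Euc n →ₗ[ℝ] Euc n)

section AuxLemmas
open Module Matrix
local notation "⟪" x ", " y "⟫" => @inner ℝ _ _ x y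

lemma euc_det_pm {n : ℕ} (g : Euc n ≃ₗᵢ[ℝ] Euc n) :
    LinearMap.det (g.toLinearEquiv : Euc n →ₗ[ℝ] Euc n) = 1 ∨
      LinearMap.det (g.toLinearEquiv : Euc n →ₗ[ℝ] Euc n) = -1 := by
  classical
  set b := EuclideanSpace.basisFun (Fin n) ℝ with hb
  set A := LinearMap.toMatrix b.toBasis b.toBasis (g.toLinearEquiv : Euc n →ₗ[ℝ] Euc n) with hA
  have hAe : ∀ i j, A i j = g (b j) i := by
    intro i j
    rw [hA, LinearMap.toMatrix_apply, b.coe_toBasis_repr_apply, EuclideanSpace.basisFun_repr,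
      b.coe_toBasis]
    rfl
  have hATA : Aᵀ * A = 1 := by
    ext j k
    have h1 : ∑ i, A i j * A i k = ⟪g (b j), g (b k)⟫ := by
      rw [PiLp.inner_apply]
      simp [hAe, RCLike.inner_apply, mul_comm]
    have h2 : ⟪g (b j), g (b k)⟫ = ⟪b j, b k⟫ := g.inner_map_map _ _
    have h3 : ⟪b j, b k⟫ = if j = k then (1:ℝ) else 0 := by
      rw [hb]
      simp [EuclideanSpace.basisFun_apply, EuclideanSpace.inner_single_left,
        EuclideanSpace.single_apply]
    simp only [Matrix.mul_apply, Matrix.transpose_apply, Matrix.one_apply]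
    rw [h1, h2, h3]
  have hdet : A.det * A.det = 1 := by
    have := congrArg Matrix.det hATA
    rwa [Matrix.det_mul, Matrix.det_transpose, Matrix.det_one] at this
  have : LinearMap.det (g.toLinearEquiv : Euc n →ₗ[ℝ] Euc n) = A.det :=
    (LinearMap.det_toMatrix b.toBasis _).symm
  rw [this]
  exact mul_self_eq_one_iff.mp hdet

lemma reflection_fix {n : ℕ} (b : OrthonormalBasis (Fin n) ℝ (Euc n)) (j₀ : Fin n)
    {j : Fin n} (hj : j ≠ j₀) : Submodule.reflection (ℝ ∙ (b j₀))ᗮ (b j) = b j := by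
  apply Submodule.reflection_mem_subspace_eq_self
  rw [Submodule.mem_orthogonal_singleton_iff_inner_right]
  exact b.orthonormal.2 (Ne.symm hj)

lemma det_reflection' {n : ℕ} (b : OrthonormalBasis (Fin n) ℝ (Euc n)) (j₀ : Fin n) :
    LinearMap.det (((Submodule.reflection (ℝ ∙ (b j₀))ᗮ).toLinearEquiv : Euc n →ₗ[ℝ] Euc n)) = -1 := by
  classical
  set R := Submodule.reflection (ℝ ∙ (b j₀))ᗮ with hR
  have hM : LinearMap.toMatrix b.toBasis b.toBasis (R.toLinearEquiv : Euc n →ₗ[ℝ] Euc n)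
      = Matrix.diagonal (fun j => if j = j₀ then (-1:ℝ) else 1) := by
    ext i j
    rw [LinearMap.toMatrix_apply, b.coe_toBasis]
    by_cases h : j = j₀
    · subst h
      have : R (b j) = -(b j) := Submodule.reflection_orthogonalComplement_singleton_eq_neg (b j)
      rw [LinearEquiv.coe_coe]
      show b.toBasis.repr (R (b j)) i = _
      rw [this, map_neg, ← b.coe_toBasis, Basis.repr_self]
      by_cases hij : i = j
      · subst hij; simp [Matrix.diagonal]
      · simp [Matrix.diagonal, hij, Ne.symm hij, Finsupp.single_apply]
    · have : R (b j) = b j := reflection_fix b j₀ h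
      rw [LinearEquiv.coe_coe]
      show b.toBasis.repr (R (b j)) i = _
      rw [this, ← b.coe_toBasis, Basis.repr_self]
      by_cases hij : i = j
      · subst hij; simp [Matrix.diagonal, h]
      · simp [Matrix.diagonal, hij, Ne.symm hij, Finsupp.single_apply]
  have := LinearMap.det_toMatrix b.toBasis (R.toLinearEquiv : Euc n →ₗ[ℝ] Euc n)
  rw [hM, Matrix.det_diagonal] at this
  rw [← this, Finset.prod_ite_eq' Finset.univ j₀ (fun _ => (-1:ℝ))]
  simp

lemma max_orth {n : ℕ} {e₀ : Euc n} {t : ℝ} (ht0 : 0 < t)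
    {F : Submodule ℝ (Euc n)}
    (hg : IsGreatest {r : ℝ | ∃ v ∈ F, ‖v‖ = 1 ∧ (inner ℝ v e₀ : ℝ) = r} t)
    {v : Euc n} (hv : v ∈ F) (hv1 : ‖v‖ = 1) (hvt : (inner ℝ v e₀ : ℝ) = t)
    {w : Euc n} (hw : w ∈ F) (hwv : (inner ℝ v w : ℝ) = 0) :
    (inner ℝ w e₀ : ℝ) = 0 := by
  rcases eq_or_ne w 0 with rfl | hw0
  · simp
  set c : ℝ := inner ℝ w e₀ with hc
  set M : ℝ := t * ‖w‖^2 with hM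
  have hMpos : 0 < M := by
    exact mul_pos ht0 (pow_pos (norm_pos_iff.mpr hw0) 2)
  have key : ∀ ε : ℝ, ε * c ≤ M * ε^2 := by
    intro ε
    set u : Euc n := v + ε • w with hu
    have huF : u ∈ F := F.add_mem hv (F.smul_mem _ hw)
    have hnu : ‖u‖^2 = 1 + ε^2 * ‖w‖^2 := by
      rw [hu, norm_add_sq_real, hv1, inner_smul_right, hwv, norm_smul]
      simp [mul_pow, sq_abs]
    have hnu1 : (1:ℝ) ≤ ‖u‖^2 := by nlinarith [sq_nonneg (ε * ‖w‖)]
    have hupos : 0 < ‖u‖ := by nlinarith [norm_nonneg u]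
    have hmem : (‖u‖⁻¹ * (t + ε * c)) ∈ {r : ℝ | ∃ v ∈ F, ‖v‖ = 1 ∧ (inner ℝ v e₀ : ℝ) = r} := by
      refine ⟨‖u‖⁻¹ • u, F.smul_mem _ huF, ?_, ?_⟩
      · rw [norm_smul]
        simp [abs_of_pos (inv_pos.mpr hupos), inv_mul_cancel₀ hupos.ne']
      · rw [real_inner_smul_left, hu, inner_add_left, real_inner_smul_left, hvt, hc]
    have hle := hg.2 hmem
    have hsq : ‖u‖ ≤ 1 + ε^2 * ‖w‖^2 := by
      have h1 : ‖u‖ = Real.sqrt (‖u‖^2) := by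
        rw [Real.sqrt_sq (norm_nonneg u)]
      rw [h1, hnu]
      have h2 : (1 + ε^2*‖w‖^2) = Real.sqrt ((1 + ε^2*‖w‖^2)^2) := by
        rw [Real.sqrt_sq]; nlinarith [sq_nonneg (ε*‖w‖)]
      nth_rewrite 2 [h2]
      apply Real.sqrt_le_sqrt
      nlinarith [sq_nonneg (ε*‖w‖)]
    -- from hle : ‖u‖⁻¹ * (t + ε c) ≤ t  ⇒  t + ε c ≤ t ‖u‖ ≤ t(1+ε²‖w‖²)
    have h3 : t + ε * c ≤ t * ‖u‖ := by
      have := mul_le_mul_of_nonneg_left hle (le_of_lt hupos)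
      rwa [← mul_assoc, mul_inv_cancel₀ hupos.ne', one_mul, mul_comm ‖u‖ t] at this
    have h4 : t * ‖u‖ ≤ t * (1 + ε^2 * ‖w‖^2) := by
      exact mul_le_mul_of_nonneg_left hsq (le_of_lt ht0)
    rw [hM]
    nlinarith
  have h1 := key (c / (2 * M))
  have hc2 : c^2 ≤ 0 := by
    have h2 : c / (2*M) * c = c^2 / (2*M) := by ring
    have h3 : M * (c / (2*M))^2 = c^2 / (4*M) := by
      field_simp
      ring
    rw [h2, h3] at h1
    rw [div_le_div_iff₀ (by linarith) (by linarith)] at h1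
    nlinarith
  nlinarith [sq_nonneg c]

lemma isGreatest_of_ortho {n : ℕ} {e : Euc n} {t : ℝ} (ht0 : 0 < t)
    {z : Euc n} (hz : ‖z‖ = 1) (hze : (inner ℝ z e : ℝ) = t)
    {W : Submodule ℝ (Euc n)} (hWz : ∀ w ∈ W, (inner ℝ z w : ℝ) = 0)
    (hWe : ∀ w ∈ W, (inner ℝ w e : ℝ) = 0) :
    IsGreatest {r : ℝ | ∃ v ∈ (Submodule.span ℝ {z}) ⊔ W, ‖v‖ = 1 ∧ (inner ℝ v e : ℝ) = r} t := by
  constructor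
  · exact ⟨z, Submodule.mem_sup_left (Submodule.mem_span_singleton_self z), hz, hze⟩
  · rintro r ⟨u, hu, hu1, rfl⟩
    rcases Submodule.mem_sup.mp hu with ⟨y, hy, w, hw, rfl⟩
    rcases Submodule.mem_span_singleton.mp hy with ⟨α, rfl⟩
    have horth : (inner ℝ (α • z) w : ℝ) = 0 := by
      rw [real_inner_smul_left, hWz w hw, mul_zero]
    have hnorm : α^2 + ‖w‖^2 = 1 := by
      have := norm_add_sq_real (α • z) w
      rw [hu1, horth, norm_smul] at this
      simp [mul_pow, sq_abs, hz] at this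
      linarith
    have hα : |α| ≤ 1 := by
      rw [← Real.sqrt_one, ← Real.sqrt_sq_eq_abs]
      apply Real.sqrt_le_sqrt
      nlinarith [sq_nonneg ‖w‖]
    have : (inner ℝ (α • z + w) e : ℝ) = α * t := by
      rw [inner_add_left, real_inner_smul_left, hze, hWe w hw, add_zero]
    rw [this]
    calc α * t ≤ |α| * t := by
          apply mul_le_mul_of_nonneg_right (le_abs_self α) (le_of_lt ht0)
      _ ≤ 1 * t := mul_le_mul_of_nonneg_right hα (le_of_lt ht0)
      _ = t := one_mul t

lemma decomp {n : ℕ} {F : Submodule ℝ (Euc n)}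
    {v : Euc n} (hv : v ∈ F) (hv1 : ‖v‖ = 1) :
    F = (Submodule.span ℝ {v}) ⊔ (F ⊓ (Submodule.span ℝ {v})ᗮ) ∧
      1 + finrank ℝ (F ⊓ (Submodule.span ℝ {v})ᗮ : Submodule ℝ (Euc n)) = finrank ℝ F := by
  have hv0 : v ≠ 0 := by intro h; rw [h] at hv1; simp at hv1
  have hvv : (inner ℝ v v : ℝ) = 1 := by
    rw [real_inner_self_eq_norm_sq, hv1]; norm_num
  have hdisj : (Submodule.span ℝ {v}) ⊓ (F ⊓ (Submodule.span ℝ {v})ᗮ) = ⊥ := by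
    rw [eq_bot_iff]
    rintro x ⟨hx1, -, hx3⟩
    rcases Submodule.mem_span_singleton.mp hx1 with ⟨α, rfl⟩
    have := Submodule.mem_orthogonal_singleton_iff_inner_right.mp hx3
    rw [real_inner_smul_right, hvv, mul_one] at this
    simp [this]
  have heq : F = (Submodule.span ℝ {v}) ⊔ (F ⊓ (Submodule.span ℝ {v})ᗮ) := by
    apply le_antisymm
    · intro x hx
      have hx' : x - (inner ℝ v x : ℝ) • v ∈ F ⊓ (Submodule.span ℝ {v})ᗮ := by
        refine Submodule.mem_inf.mpr ⟨F.sub_mem hx (F.smul_mem _ hv), ?_⟩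
        rw [Submodule.mem_orthogonal_singleton_iff_inner_right, inner_sub_right,
          real_inner_smul_right, hvv, mul_one, sub_self]
      have : x = (inner ℝ v x : ℝ) • v + (x - (inner ℝ v x : ℝ) • v) := by abel
      rw [this]
      exact Submodule.add_mem _ (Submodule.mem_sup_left
        (Submodule.mem_span_singleton.mpr ⟨_, rfl⟩)) (Submodule.mem_sup_right hx')
    · apply sup_le
      · rw [Submodule.span_le]; simpa using hv
      · exact inf_le_left
  refine ⟨heq, ?_⟩
  have := Submodule.finrank_sup_add_finrank_inf_eq (Submodule.span ℝ {v})
    (F ⊓ (Submodule.span ℝ {v})ᗮ)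
  rw [hdisj, ← heq, finrank_span_singleton hv0] at this
  simpa using this.symm

lemma adapted_basis {n i : ℕ} (hi : 1 ≤ i) (hin : i + 2 ≤ n) {e₀ : Euc n} (he0 : ‖e₀‖ = 1)
    {t : ℝ} (ht0 : 0 < t) (ht1 : t < 1)
    {F : Submodule ℝ (Euc n)} (hF : finrank ℝ F = i)
    (hg : IsGreatest {r : ℝ | ∃ v ∈ F, ‖v‖ = 1 ∧ (inner ℝ v e₀ : ℝ) = r} t) :
    ∃ b : OrthonormalBasis (Fin n) ℝ (Euc n), b ⟨0, by omega⟩ = e₀ ∧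
      F = Submodule.span ℝ
        ({t • e₀ + Real.sqrt (1 - t^2) • b ⟨1, by omega⟩} ∪
          b '' {j : Fin n | 2 ≤ (j : ℕ) ∧ (j : ℕ) ≤ i}) := by
  classical
  obtain ⟨⟨v, hvF, hv1, hvt⟩, hub⟩ := hg
  have hgg : IsGreatest {r : ℝ | ∃ v ∈ F, ‖v‖ = 1 ∧ (inner ℝ v e₀ : ℝ) = r} t :=
    ⟨⟨v, hvF, hv1, hvt⟩, hub⟩
  set s' : ℝ := Real.sqrt (1 - t^2) with hs'
  have h1t : 0 < 1 - t^2 := by nlinarith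
  have hs'pos : 0 < s' := Real.sqrt_pos.mpr h1t
  have hs'sq : s'^2 = 1 - t^2 := Real.sq_sqrt (le_of_lt h1t)
  set f : Euc n := s'⁻¹ • (v - t • e₀) with hf
  have hvf : v = t • e₀ + s' • f := by
    rw [hf, smul_smul, mul_inv_cancel₀ hs'pos.ne', one_smul]
    abel
  have hnvte : ‖v - t • e₀‖ = s' := by
    have : ‖v - t • e₀‖^2 = 1 - t^2 := by
      rw [norm_sub_sq_real, hv1, inner_smul_right, hvt, norm_smul, he0]
      simp [mul_pow, sq_abs]
      ring
    rw [hs', ← this, Real.sqrt_sq (norm_nonneg _)]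
  have hf1 : ‖f‖ = 1 := by
    rw [hf, norm_smul, hnvte, Real.norm_eq_abs, abs_of_pos (inv_pos.mpr hs'pos),
      inv_mul_cancel₀ hs'pos.ne']
  have hee : (inner ℝ e₀ e₀ : ℝ) = 1 := by
    rw [real_inner_self_eq_norm_sq, he0]; norm_num
  have hef : (inner ℝ e₀ f : ℝ) = 0 := by
    rw [hf, real_inner_smul_right, inner_sub_right, real_inner_smul_right, hee,
      real_inner_comm v e₀, hvt]
    ring
  set K : Submodule ℝ (Euc n) := F ⊓ (Submodule.span ℝ {v})ᗮ with hK
  obtain ⟨hFeq, hKrank⟩ := decomp hvF hv1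
  have hKrank' : finrank ℝ K = i - 1 := by rw [hK]; omega
  have hK2 : ∀ w ∈ K, (inner ℝ v w : ℝ) = 0 := by
    intro w hw
    exact Submodule.mem_orthogonal_singleton_iff_inner_right.mp (Submodule.mem_inf.mp hw).2
  have hK1 : ∀ w ∈ K, (inner ℝ w e₀ : ℝ) = 0 := by
    intro w hw
    exact max_orth ht0 hgg hvF hv1 hvt (Submodule.mem_inf.mp hw).1 (hK2 w hw)
  have hfk : ∀ w ∈ K, (inner ℝ f w : ℝ) = 0 := by
    intro w hw
    rw [hf, real_inner_smul_left, inner_sub_left, real_inner_smul_left, hK2 w hw,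
      real_inner_comm w e₀, hK1 w hw]
    ring
  set kb : OrthonormalBasis (Fin (i-1)) ℝ K :=
    (stdOrthonormalBasis ℝ K).reindex (finCongr hKrank') with hkb
  set w : Fin n → Euc n := fun j =>
    if (j : ℕ) = 0 then e₀ else if (j : ℕ) = 1 then f else
      if h : (j : ℕ) - 2 < i - 1 then (kb ⟨(j : ℕ) - 2, h⟩ : Euc n) else 0 with hwdef
  set S : Set (Fin n) := {j : Fin n | (j : ℕ) ≤ i} with hS
  have hw0 : w ⟨0, by omega⟩ = e₀ := by simp [hwdef]
  have hw1 : w ⟨1, by omega⟩ = f := by simp [hwdef]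
  have hwk : ∀ (j : Fin n) (h2 : 2 ≤ (j:ℕ)) (hji : (j:ℕ) ≤ i),
      w j = (kb ⟨(j:ℕ)-2, by omega⟩ : Euc n) := by
    intro j h2 hji
    have hj0 : (j:ℕ) ≠ 0 := by omega
    have hj1 : (j:ℕ) ≠ 1 := by omega
    have hjlt : (j:ℕ) - 2 < i - 1 := by omega
    simp [hwdef, hj0, hj1, hjlt]
  have hkbmem : ∀ l : Fin (i-1), ((kb l : Euc n)) ∈ K := fun l => SetLike.coe_mem _
  have hkbnorm : ∀ l : Fin (i-1), ‖(kb l : Euc n)‖ = 1 := by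
    intro l
    exact kb.orthonormal.1 l
  have hkbinner : ∀ l l' : Fin (i-1), l ≠ l' → (inner ℝ (kb l : Euc n) (kb l' : Euc n) : ℝ) = 0 := by
    intro l l' hll
    exact kb.orthonormal.2 hll
  -- orthonormality of the partial family
  have hlt : ∀ a b : Fin n, a ∈ S → b ∈ S → (a:ℕ) < (b:ℕ) → (inner ℝ (w a) (w b) : ℝ) = 0 := by
    intro a b ha hb hab
    simp only [hS, Set.mem_setOf_eq] at ha hb
    rcases Nat.lt_or_ge (a:ℕ) 2 with ha2 | ha2
    · rcases Nat.lt_or_ge (b:ℕ) 2 with hb2 | hb2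
      · -- a = 0, b = 1
        have ha0 : (a:ℕ) = 0 := by omega
        have hb1 : (b:ℕ) = 1 := by omega
        have hwa : w a = e₀ := by simp [hwdef, ha0]
        have hwb : w b = f := by simp [hwdef, hb1, ha0 ▸ (by omega : (1:ℕ) ≠ 0)]
        rw [hwa, hwb, hef]
      · have hwb : w b = (kb ⟨(b:ℕ)-2, by omega⟩ : Euc n) := hwk b hb2 hb
        rcases Nat.lt_or_ge (a:ℕ) 1 with ha1 | ha1
        · have hwa : w a = e₀ := by simp [hwdef, (by omega : (a:ℕ) = 0)]
          rw [hwa, hwb, real_inner_comm]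
          exact hK1 _ (hkbmem _)
        · have hwa : w a = f := by simp [hwdef, (by omega : (a:ℕ) = 1)]
          rw [hwa, hwb]
          exact hfk _ (hkbmem _)
    · have hb2 : 2 ≤ (b:ℕ) := by omega
      have hwa : w a = (kb ⟨(a:ℕ)-2, by omega⟩ : Euc n) := hwk a ha2 ha
      have hwb : w b = (kb ⟨(b:ℕ)-2, by omega⟩ : Euc n) := hwk b hb2 hb
      rw [hwa, hwb]
      apply hkbinner
      intro hcon
      have := congrArg Fin.val hcon
      simp at this
      omega
  have hnorm1 : ∀ a : Fin n, a ∈ S → ‖w a‖ = 1 := by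
    intro a ha
    simp only [hS, Set.mem_setOf_eq] at ha
    rcases Nat.lt_or_ge (a:ℕ) 1 with h | h
    · have : w a = e₀ := by simp [hwdef, (by omega : (a:ℕ) = 0)]
      rw [this, he0]
    rcases Nat.lt_or_ge (a:ℕ) 2 with h' | h'
    · have : w a = f := by simp [hwdef, (by omega : (a:ℕ) = 1)]
      rw [this, hf1]
    · rw [hwk a h' ha]
      exact hkbnorm _
  have horth : Orthonormal ℝ (S.restrict w) := by
    constructor
    · rintro ⟨a, ha⟩
      exact hnorm1 a ha
    · rintro ⟨a, ha⟩ ⟨b, hb⟩ hab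
      have hab' : a ≠ b := by
        intro h; apply hab; exact Subtype.ext h
      rcases Nat.lt_trichotomy (a:ℕ) (b:ℕ) with h | h | h
      · exact hlt a b ha hb h
      · exact absurd (Fin.ext h) hab'
      · rw [real_inner_comm]; exact hlt b a hb ha h
  obtain ⟨b, hb⟩ := horth.exists_orthonormalBasis_extension_of_card_eq
    (by simp [finrank_euclideanSpace_fin])
  have hb0 : b ⟨0, by omega⟩ = e₀ := by
    rw [hb _ (by show (0:ℕ) ≤ i; omega), hw0]
  have hb1 : b ⟨1, by omega⟩ = f := by
    rw [hb _ (by show (1:ℕ) ≤ i; omega), hw1]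
  refine ⟨b, hb0, ?_⟩
  have himg : b '' {j : Fin n | 2 ≤ (j : ℕ) ∧ (j : ℕ) ≤ i}
      = Set.range (fun l : Fin (i-1) => (kb l : Euc n)) := by
    ext x
    constructor
    · rintro ⟨j, ⟨hj2, hji⟩, rfl⟩
      rw [hb _ (by simpa [hS] using hji), hwk j hj2 hji]
      exact ⟨⟨(j:ℕ)-2, by omega⟩, rfl⟩
    · rintro ⟨l, rfl⟩
      refine ⟨⟨(l:ℕ)+2, by omega⟩, ⟨by show 2 ≤ (l:ℕ)+2; omega, by show (l:ℕ)+2 ≤ i; omega⟩, ?_⟩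
      rw [hb _ (by show (l:ℕ)+2 ≤ i; omega), hwk _ (by show 2 ≤ (l:ℕ)+2; omega)
        (by show (l:ℕ)+2 ≤ i; omega)]
      show ((kb ⟨(l:ℕ)+2-2, _⟩ : K) : Euc n) = _
      congr 1
  have hspanK : Submodule.span ℝ (Set.range (fun l : Fin (i-1) => (kb l : Euc n))) = K := by
    have h1 : (fun l : Fin (i-1) => (kb l : Euc n)) = K.subtype ∘ kb := rfl
    rw [h1, Set.range_comp, Submodule.span_image, ← kb.coe_toBasis, Basis.span_eq,
      Submodule.map_subtype_top]
  rw [Submodule.span_union, himg, hspanK, hb1,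
    show t • e₀ + s' • f = v from hvf.symm]
  exact hFeq

lemma same_orbit {n i : ℕ} (hi : 1 ≤ i) (hin : i + 2 ≤ n) {e₀ : Euc n} (he0 : ‖e₀‖ = 1)
    {t : ℝ} (ht0 : 0 < t) (ht1 : t < 1)
    {F₁ F₂ : Submodule ℝ (Euc n)} (h1 : finrank ℝ F₁ = i) (h2 : finrank ℝ F₂ = i)
    (hg1 : IsGreatest {r : ℝ | ∃ v ∈ F₁, ‖v‖ = 1 ∧ (inner ℝ v e₀ : ℝ) = r} t)
    (hg2 : IsGreatest {r : ℝ | ∃ v ∈ F₂, ‖v‖ = 1 ∧ (inner ℝ v e₀ : ℝ) = r} t) :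
    ∃ τ : Rot n, τ.1 e₀ = e₀ ∧ rotSub τ F₁ = F₂ := by
  classical
  obtain ⟨b₁, hb₁0, hb₁F⟩ := adapted_basis hi hin he0 ht0 ht1 h1 hg1
  obtain ⟨b₂, hb₂0, hb₂F⟩ := adapted_basis hi hin he0 ht0 ht1 h2 hg2
  set g : Euc n ≃ₗᵢ[ℝ] Euc n := b₁.repr.trans b₂.repr.symm with hgdef
  have hgj : ∀ j : Fin n, g (b₁ j) = b₂ j := by
    intro j
    rw [hgdef]
    simp [LinearIsometryEquiv.trans_apply, OrthonormalBasis.repr_self,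
      OrthonormalBasis.repr_symm_single]
  have hge : g e₀ = e₀ := by
    rw [← hb₁0, hgj, hb₂0]
    exact hb₁0.symm
  have key : ∀ (h : Euc n ≃ₗᵢ[ℝ] Euc n), h e₀ = e₀ →
      (∀ j : Fin n, 2 ≤ (j:ℕ) → (j:ℕ) ≤ i → h (b₁ j) = b₂ j) →
      h (b₁ ⟨1, by omega⟩) = b₂ ⟨1, by omega⟩ →
      Submodule.map (h.toLinearEquiv : Euc n →ₗ[ℝ] Euc n) F₁ = F₂ := by
    intro h he hJmap h1map
    rw [hb₁F, Submodule.map_span, hb₂F]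
    congr 1
    have hco : ⇑(h.toLinearEquiv : Euc n →ₗ[ℝ] Euc n) = ⇑h := rfl
    rw [hco, Set.image_union, Set.image_singleton]
    congr 1
    · congr 1
      rw [map_add, _root_.map_smul, _root_.map_smul, he, h1map]
    · rw [← Set.image_comp]
      exact Set.image_congr (fun j hj => hJmap j hj.1 hj.2)
  rcases euc_det_pm g with hdet | hdet
  · exact ⟨⟨g, hdet⟩, hge, key g hge (fun j _ _ => hgj j) (hgj _)⟩
  · set u := b₁ ⟨n-1, by omega⟩ with hu
    set r : Euc n ≃ₗᵢ[ℝ] Euc n := Submodule.reflection (ℝ ∙ u)ᗮ with hr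
    have hrfix : ∀ j : Fin n, (j:ℕ) ≠ n-1 → r (b₁ j) = b₁ j := by
      intro j hj
      exact reflection_fix b₁ _ (by intro hh; exact hj (congrArg Fin.val hh))
    have hre : r e₀ = e₀ := by
      rw [← hb₁0]; exact hrfix _ (by simp; omega)
    set τ : Euc n ≃ₗᵢ[ℝ] Euc n := r.trans g with hτ
    have hτdet : LinearMap.det (τ.toLinearEquiv : Euc n →ₗ[ℝ] Euc n) = 1 := by
      have hcomp : (τ.toLinearEquiv : Euc n →ₗ[ℝ] Euc n)
          = (g.toLinearEquiv : Euc n →ₗ[ℝ] Euc n) ∘ₗ (r.toLinearEquiv : Euc n →ₗ[ℝ] Euc n) := by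
        ext x; rfl
      rw [hcomp, LinearMap.det_comp, hdet, hr, det_reflection' b₁ _]
      norm_num
    have hτe : τ e₀ = e₀ := by
      rw [hτ, LinearIsometryEquiv.trans_apply, hre, hge]
    refine ⟨⟨τ, hτdet⟩, hτe, key τ hτe ?_ ?_⟩
    · intro j hj2 hji
      rw [hτ, LinearIsometryEquiv.trans_apply, hrfix j (by omega), hgj]
    · rw [hτ, LinearIsometryEquiv.trans_apply, hrfix _ (by simp; omega), hgj]

/-- Let 1 ≤ i ≤ n-2 and E an i-dimensional subspace with neither e₀ ∈ E
nor E ⊆ e₀^⊥, and t_E = max{⟨v,e₀⟩ : v ∈ E, ‖v‖=1}. If η ∈ SO(n) is such that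
η(H ∩ S^{n-1}) meets H ∩ S^{n-1}, where H = {x : ⟨x,e₀⟩ = t_E}, then there is an
i-dimensional subspace G such that E, G and η⁻¹G lie in the same orbit of the
stabilizer of e₀ in SO(n). -/
theorem statement6 (n i : ℕ) (hi : 1 ≤ i) (hin : i ≤ n - 2)
    (e₀ : Euc n) (he0 : ‖e₀‖ = 1)
    (E : Submodule ℝ (Euc n)) (hE : Module.finrank ℝ E = i)
    (hE₁ : e₀ ∉ E) (hE₂ : ¬ E ≤ (Submodule.span ℝ {e₀})ᗮ)
    (tE : ℝ)
    (htE : IsGreatest {r : ℝ | ∃ v ∈ E, ‖v‖ = 1 ∧ (inner ℝ v e₀ : ℝ) = r} tE)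
    (η : Rot n)
    (hη : (η.1 '' {x : Euc n | (inner ℝ x e₀ : ℝ) = tE ∧ ‖x‖ = 1}
        ∩ {x : Euc n | (inner ℝ x e₀ : ℝ) = tE ∧ ‖x‖ = 1}).Nonempty) :
    ∃ G : Submodule ℝ (Euc n), Module.finrank ℝ G = i ∧
      (∃ τ : Rot n, τ.1 e₀ = e₀ ∧ rotSub τ E = G) ∧
      (∃ τ : Rot n, τ.1 e₀ = e₀ ∧ rotSub τ E = rotSub η⁻¹ G) := by
  classical
  have hin' : i + 2 ≤ n := by omega
  obtain ⟨⟨v, hvE, hv1, hvt⟩, hub⟩ := htE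
  have htE' : IsGreatest {r : ℝ | ∃ v ∈ E, ‖v‖ = 1 ∧ (inner ℝ v e₀ : ℝ) = r} tE :=
    ⟨⟨v, hvE, hv1, hvt⟩, hub⟩
  -- positivity of tE
  have htpos : 0 < tE := by
    obtain ⟨w, hwE, hw⟩ : ∃ w ∈ E, (inner ℝ w e₀ : ℝ) ≠ 0 := by
      by_contra hcon
      push_neg at hcon
      apply hE₂
      intro x hx
      rw [Submodule.mem_orthogonal_singleton_iff_inner_right, real_inner_comm]
      exact hcon x hx
    set c : ℝ := inner ℝ w e₀ with hc
    have hw0 : w ≠ 0 := by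
      intro h; rw [h] at hc; simp at hc; exact hw hc
    have hnw : 0 < ‖w‖ := norm_pos_iff.mpr hw0
    set α : ℝ := ‖w‖⁻¹ * (|c| / c) with hα
    have habs : |α| = ‖w‖⁻¹ := by
      rw [hα, abs_mul, abs_div, abs_abs, div_self (abs_ne_zero.mpr hw), mul_one,
        abs_of_pos (inv_pos.mpr hnw)]
    have hmem : (‖w‖⁻¹ * |c|) ∈ {r : ℝ | ∃ v ∈ E, ‖v‖ = 1 ∧ (inner ℝ v e₀ : ℝ) = r} := by
      refine ⟨α • w, E.smul_mem _ hwE, ?_, ?_⟩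
      · rw [norm_smul, Real.norm_eq_abs, habs, inv_mul_cancel₀ hnw.ne']
      · rw [real_inner_smul_left, ← hc, hα]
        field_simp
    have hle := hub hmem
    have hpos : 0 < ‖w‖⁻¹ * |c| := by positivity
    exact lt_of_lt_of_le hpos hle
  -- tE < 1
  have htle : tE ≤ 1 := by
    rw [← hvt]
    calc (inner ℝ v e₀ : ℝ) ≤ ‖v‖ * ‖e₀‖ := real_inner_le_norm v e₀
      _ = 1 := by rw [hv1, he0, mul_one]
  have ht1 : tE < 1 := by
    rcases lt_or_eq_of_le htle with h | h
    · exact h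
    · exfalso
      have : (inner ℝ v e₀ : ℝ) = ‖v‖ * ‖e₀‖ := by rw [hvt, h, hv1, he0, mul_one]
      rw [inner_eq_norm_mul_iff_real, hv1, he0, one_smul, one_smul] at this
      rw [this] at hvE
      exact hE₁ hvE
  -- the point z on both circles
  obtain ⟨z, hz1, hz2⟩ := hη
  obtain ⟨x, hxC, hxz⟩ := hz1
  set e₁ : Euc n := η.1 e₀ with he₁def
  have he₁ : ‖e₁‖ = 1 := by rw [he₁def, LinearIsometryEquiv.norm_map, he0]
  have hze : (inner ℝ z e₀ : ℝ) = tE := hz2.1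
  have hzn : ‖z‖ = 1 := hz2.2
  have hze₁ : (inner ℝ z e₁ : ℝ) = tE := by
    have h1 : (inner ℝ (η.1 x) (η.1 e₀) : ℝ) = (inner ℝ x e₀ : ℝ) :=
      η.1.inner_map_map x e₀
    rw [hxz] at h1
    rw [he₁def, h1]
    exact hxC.1
  have hz0 : z ≠ 0 := by
    intro h; rw [h] at hzn; simp at hzn
  -- build W
  set V : Submodule ℝ (Euc n) := (Submodule.span ℝ ({e₀, e₁, z} : Set (Euc n)))ᗮ with hVdef
  have hsup : ∀ p q : Submodule ℝ (Euc n),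
      finrank ℝ (p ⊔ q : Submodule ℝ (Euc n)) ≤ finrank ℝ p + finrank ℝ q := by
    intro p q
    have := Submodule.finrank_sup_add_finrank_inf_eq p q
    omega
  have hsing : ∀ a : Euc n, finrank ℝ (Submodule.span ℝ {a}) ≤ 1 := by
    intro a
    rcases eq_or_ne a 0 with rfl | ha
    · rw [Submodule.span_zero_singleton]
      simp
    · rw [finrank_span_singleton ha]
  have hspan3 : finrank ℝ (Submodule.span ℝ ({e₀, e₁, z} : Set (Euc n))) ≤ 3 := by
    have h1 : ({e₀, e₁, z} : Set (Euc n)) = insert e₀ (insert e₁ {z}) := rfl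
    rw [h1, Submodule.span_insert, Submodule.span_insert]
    calc finrank ℝ (Submodule.span ℝ {e₀} ⊔ (Submodule.span ℝ {e₁} ⊔ Submodule.span ℝ {z})
          : Submodule ℝ (Euc n))
        ≤ finrank ℝ (Submodule.span ℝ {e₀}) +
          finrank ℝ (Submodule.span ℝ {e₁} ⊔ Submodule.span ℝ {z} : Submodule ℝ (Euc n)) :=
          hsup _ _
      _ ≤ finrank ℝ (Submodule.span ℝ {e₀}) +
          (finrank ℝ (Submodule.span ℝ {e₁}) + finrank ℝ (Submodule.span ℝ {z})) := by
          have := hsup (Submodule.span ℝ {e₁}) (Submodule.span ℝ {z})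
          omega
      _ ≤ 1 + (1 + 1) := by
          have := hsing e₀; have := hsing e₁; have := hsing z; omega
      _ = 3 := by norm_num
  have hVrank : i - 1 ≤ finrank ℝ V := by
    have h2 := Submodule.finrank_add_finrank_orthogonal
      (K := Submodule.span ℝ ({e₀, e₁, z} : Set (Euc n)))
    rw [finrank_euclideanSpace_fin] at h2
    rw [hVdef]
    omega
  set kb := stdOrthonormalBasis ℝ V with hkb
  set Wfam : Fin (i-1) → Euc n := fun l => (kb (Fin.castLE hVrank l) : Euc n) with hWfam
  have hWfamV : ∀ l, Wfam l ∈ V := fun l => SetLike.coe_mem _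
  set W : Submodule ℝ (Euc n) := Submodule.span ℝ (Set.range Wfam) with hWdef
  have hWV : W ≤ V := by
    rw [hWdef, Submodule.span_le]
    rintro - ⟨l, rfl⟩
    exact hWfamV l
  have hWrank : finrank ℝ W = i - 1 := by
    have ho : Orthonormal ℝ Wfam := by
      have h1 : Orthonormal ℝ (fun l : Fin (i-1) => kb (Fin.castLE hVrank l)) :=
        kb.orthonormal.comp _ (Fin.castLE_injective hVrank)
      exact h1.comp_linearIsometry V.subtypeₗᵢ
    rw [hWdef, finrank_span_eq_card ho.linearIndependent, Fintype.card_fin]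
  have hWorth : ∀ u : Euc n, u ∈ ({e₀, e₁, z} : Set (Euc n)) → ∀ w ∈ W, (inner ℝ u w : ℝ) = 0 := by
    intro u hu w hw
    have hwV : w ∈ V := hWV hw
    rw [hVdef, Submodule.mem_orthogonal] at hwV
    exact hwV u (Submodule.subset_span hu)
  have hWz : ∀ w ∈ W, (inner ℝ z w : ℝ) = 0 :=
    fun w hw => hWorth z (by simp) w hw
  have hWe₀ : ∀ w ∈ W, (inner ℝ w e₀ : ℝ) = 0 :=
    fun w hw => by rw [real_inner_comm]; exact hWorth e₀ (by simp) w hw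
  have hWe₁ : ∀ w ∈ W, (inner ℝ w e₁ : ℝ) = 0 :=
    fun w hw => by rw [real_inner_comm]; exact hWorth e₁ (by simp) w hw
  -- the subspace G
  set G : Submodule ℝ (Euc n) := Submodule.span ℝ {z} ⊔ W with hGdef
  have hGrank : finrank ℝ G = i := by
    have hdisj : Submodule.span ℝ {z} ⊓ W = ⊥ := by
      rw [eq_bot_iff]
      rintro y hy
      rcases Submodule.mem_span_singleton.mp (Submodule.mem_inf.mp hy).1 with ⟨β, rfl⟩
      have := hWz _ (Submodule.mem_inf.mp hy).2
      rw [real_inner_smul_right, real_inner_self_eq_norm_sq, hzn] at this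
      simp only [one_pow, mul_one] at this
      simp [this]
    have := Submodule.finrank_sup_add_finrank_inf_eq (Submodule.span ℝ {z}) W
    rw [hdisj, finrank_span_singleton hz0, hWrank, ← hGdef] at this
    simp only [finrank_bot, add_zero] at this
    omega
  have hGg0 : IsGreatest {r : ℝ | ∃ v ∈ G, ‖v‖ = 1 ∧ (inner ℝ v e₀ : ℝ) = r} tE :=
    isGreatest_of_ortho htpos hzn hze hWz hWe₀
  have hGg1 : IsGreatest {r : ℝ | ∃ v ∈ G, ‖v‖ = 1 ∧ (inner ℝ v e₁ : ℝ) = r} tE :=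
    isGreatest_of_ortho htpos hzn hze₁ hWz hWe₁
  -- the rotated subspace
  have hinv : ((η⁻¹ : Rot n) : Euc n ≃ₗᵢ[ℝ] Euc n) = (η.1).symm := rfl
  have hG'rank : finrank ℝ (rotSub η⁻¹ G) = i := by
    rw [rotSub, LinearEquiv.finrank_map_eq, hGrank]
  have hG'g : IsGreatest {r : ℝ | ∃ v ∈ rotSub η⁻¹ G, ‖v‖ = 1 ∧ (inner ℝ v e₀ : ℝ) = r} tE := by
    have hseteq : {r : ℝ | ∃ v ∈ rotSub η⁻¹ G, ‖v‖ = 1 ∧ (inner ℝ v e₀ : ℝ) = r}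
        = {r : ℝ | ∃ v ∈ G, ‖v‖ = 1 ∧ (inner ℝ v e₁ : ℝ) = r} := by
      ext r
      constructor
      · rintro ⟨u, hu, hu1, rfl⟩
        rcases Submodule.mem_map.mp hu with ⟨y, hy, rfl⟩
        refine ⟨y, hy, ?_, ?_⟩
        · rw [← hu1]
          simp [hinv]
        · have h1 : (inner ℝ (η.1 ((η.1).symm y)) (η.1 e₀) : ℝ)
              = (inner ℝ ((η.1).symm y) e₀ : ℝ) := η.1.inner_map_map _ _
          rw [LinearIsometryEquiv.apply_symm_apply] at h1
          rw [← he₁def] at h1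
          exact h1
      · rintro ⟨y, hy, hy1, rfl⟩
        refine ⟨(η.1).symm y, Submodule.mem_map_of_mem hy, by simp [hy1], ?_⟩
        have h1 : (inner ℝ (η.1 ((η.1).symm y)) (η.1 e₀) : ℝ)
            = (inner ℝ ((η.1).symm y) e₀ : ℝ) := η.1.inner_map_map _ _
        rw [LinearIsometryEquiv.apply_symm_apply] at h1
        rw [← he₁def] at h1
        exact h1.symm
    rw [hseteq]
    exact hGg1
  obtain ⟨τ₁, hτ₁e, hτ₁⟩ := same_orbit hi hin' he0 htpos ht1 hE hGrank htE' hGg0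
  obtain ⟨τ₂, hτ₂e, hτ₂⟩ := same_orbit hi hin' he0 htpos ht1 hE hG'rank htE' hG'g
  exact ⟨G, hGrank, ⟨τ₁, hτ₁e, hτ₁⟩, ⟨τ₂, hτ₂e, hτ₂⟩⟩

end AuxLemmas

end
end

section
/- Let P₂ⁿ(t) = (n t² - 1)/(n-1) be the second Legendre polynomial in dimension n. For α ∈ R, the function h_α(u) = 1 + α P₂ⁿ(⟨u, ē⟩) on S^{n-1} is the support function of a convex body of revolution if and only if α ∈ [-(n-1)/(2n-1), (n-1)/(n+1)]. -/
open MeasureTheory Metric Set Filter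
open scoped ENNReal NNReal Pointwise
noncomputable section

set_option maxHeartbeats 1000000

/-- The support function h(K, u) = sup {⟨u, x⟩ : x ∈ K}. -/
def suppFn {n : ℕ} (K : Set (Euc n)) (u : Euc n) : ℝ :=
  sSup ((fun x => (inner ℝ u x : ℝ)) '' K)

lemma aux_key (n α s t p q : ℝ)
    (hα1 : -(n-1) ≤ α*(2*n-1)) (hα2 : α*(n+1) ≤ n-1)
    (ht : t^2 + p^2 = 1) (hs : s^2 + q^2 = 1) :
    (n-1-α - n*α*t^2)*(s*t+p*q) + 2*n*α*t*s ≤ (n-1-α) + n*α*s^2 := by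
  have hc : 0 ≤ 1 - (s*t+p*q) := by nlinarith [sq_nonneg (s-t), sq_nonneg (p-q)]
  have hB1 : 0 ≤ (s-t)^2 + p^2*(1-(s*t+p*q)) :=
    add_nonneg (sq_nonneg _) (mul_nonneg (sq_nonneg _) hc)
  have hB2 : 0 ≤ (p-q)^2 + t^2*(1-(s*t+p*q)) :=
    add_nonneg (sq_nonneg _) (mul_nonneg (sq_nonneg _) hc)
  have hident : 3*(((n-1-α) + n*α*s^2) - ((n-1-α - n*α*t^2)*(s*t+p*q) + 2*n*α*t*s))
      = (n-1+α*(2*n-1))*((s-t)^2 + p^2*(1-(s*t+p*q)))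
        + (n-1-α*(n+1))*((p-q)^2 + t^2*(1-(s*t+p*q))) := by
    linear_combination ((2+2*α-2*n-n*α) + (n-1-α+2*n*α)*(p*q+s*t))*ht + (1+α-n+n*α)*hs
  nlinarith [mul_nonneg (by linarith : (0:ℝ) ≤ n-1+α*(2*n-1)) hB1,
             mul_nonneg (by linarith : (0:ℝ) ≤ n-1-α*(n+1)) hB2]

lemma aux_coeff (n α t : ℝ) (hn : 2 ≤ n) (hα1 : -(n-1) ≤ α*(2*n-1)) (hα2 : α*(n+1) ≤ n-1)
    (ht2 : t^2 ≤ 1) : 0 ≤ n-1-α - n*α*t^2 := by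
  rcases le_or_gt 0 α with h|h
  · nlinarith [mul_nonneg (mul_nonneg (by linarith : (0:ℝ) ≤ n) h) (by linarith : 0 ≤ 1 - t^2)]
  · nlinarith [mul_nonneg (mul_nonneg (by linarith : (0:ℝ) ≤ n) (neg_nonneg.mpr h.le)) (sq_nonneg t)]

private theorem statement13_fwd (n : ℕ) (hn : 2 ≤ n) (e₀ : Euc n) (he0 : ‖e₀‖ = 1) (α : ℝ)
    (K : Set (Euc n)) (hKc : IsCompact K) (hKne : K.Nonempty)
    (hsupp : ∀ u : Euc n, ‖u‖ = 1 →
      suppFn K u = 1 + α * (((n : ℝ) * (inner ℝ u e₀ : ℝ) ^ 2 - 1) / ((n : ℝ) - 1))) :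
    α ∈ Set.Icc (-((n : ℝ) - 1) / (2 * (n : ℝ) - 1)) (((n : ℝ) - 1) / ((n : ℝ) + 1)) := by
  have hn2 : (2:ℝ) ≤ (n:ℝ) := by exact_mod_cast hn
  have hn1 : (0:ℝ) < (n:ℝ) - 1 := by linarith
  have heinner : (inner ℝ e₀ e₀ : ℝ) = 1 := by
    rw [real_inner_self_eq_norm_sq, he0]; norm_num
  -- find a unit vector orthogonal to e₀
  obtain ⟨e₁, he1, h01⟩ : ∃ e₁ : Euc n, ‖e₁‖ = 1 ∧ (inner ℝ e₀ e₁ : ℝ) = 0 := by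
    have he00 : e₀ ≠ 0 := by
      intro h; rw [h, norm_zero] at he0; norm_num at he0
    have hne : ((ℝ ∙ e₀)ᗮ : Submodule ℝ (Euc n)) ≠ ⊥ := by
      intro hbot
      have htop : (ℝ ∙ e₀ : Submodule ℝ (Euc n)) = ⊤ :=
        Submodule.orthogonal_eq_bot_iff.mp hbot
      have h1 : Module.finrank ℝ (ℝ ∙ e₀ : Submodule ℝ (Euc n)) = 1 :=
        finrank_span_singleton he00
      rw [htop, finrank_top, finrank_euclideanSpace_fin] at h1
      omega
    obtain ⟨x, hx, hx0⟩ := Submodule.exists_mem_ne_zero_of_ne_bot hne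
    refine ⟨‖x‖⁻¹ • x, ?_, ?_⟩
    · rw [norm_smul]; simp [norm_ne_zero_iff.mpr hx0]
    · rw [real_inner_smul_right,
        (Submodule.mem_orthogonal _ _).mp hx e₀ (Submodule.mem_span_singleton_self e₀)]
      ring
  have h10 : (inner ℝ e₁ e₀ : ℝ) = 0 := by rw [real_inner_comm]; exact h01
  -- support function machinery
  have hbdd : ∀ w : Euc n, BddAbove ((fun x => (inner ℝ w x : ℝ)) '' K) :=
    fun w => (hKc.image (continuous_const.inner continuous_id)).bddAbove
  have hub : ∀ (w x : Euc n), x ∈ K → (inner ℝ w x : ℝ) ≤ suppFn K w :=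
    fun w x hx => le_csSup (hbdd w) ⟨x, hx, rfl⟩
  have hatt : ∀ w : Euc n, ∃ z ∈ K, (inner ℝ w z : ℝ) = suppFn K w := by
    intro w
    have himg : IsCompact (((fun x => (inner ℝ w x : ℝ)) '' K) : Set ℝ) :=
      hKc.image (continuous_const.inner continuous_id)
    obtain ⟨z, hz, hz2⟩ := himg.sSup_mem (hKne.image _)
    exact ⟨z, hz, hz2⟩
  have hpair : ∀ (u v w : Euc n) (c : ℝ), ‖u‖ = 1 → ‖v‖ = 1 → ‖w‖ = 1 →
      u + v = c • w → c * suppFn K w ≤ suppFn K u + suppFn K v := by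
    intro u v w c hu hv hw he
    obtain ⟨z, hz, hz2⟩ := hatt w
    have h1 := hub u z hz
    have h2 := hub v z hz
    have h3 : (inner ℝ (u+v) z : ℝ) = c * (inner ℝ w z : ℝ) := by
      rw [he, real_inner_smul_left]
    rw [inner_add_left] at h3
    rw [← hz2]
    linarith
  -- norms and inner ℝ products of combinations
  have hnorm : ∀ a b : ℝ, a^2 + b^2 = 1 → ‖a • e₀ + b • e₁‖ = 1 := by
    intro a b hab
    have h2 : ‖a • e₀ + b • e₁‖^2 = 1 := by
      rw [norm_add_sq_real, real_inner_smul_left, real_inner_smul_right, h01,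
        norm_smul, norm_smul, he0, he1]
      simp only [Real.norm_eq_abs, mul_one, mul_zero]
      rw [sq_abs, sq_abs]
      linarith
    rw [← Real.sqrt_sq (norm_nonneg _), h2, Real.sqrt_one]
  have hip : ∀ a b : ℝ, (inner ℝ (a • e₀ + b • e₁) e₀ : ℝ) = a := by
    intro a b
    rw [inner_add_left, real_inner_smul_left, real_inner_smul_left, heinner, h10]
    ring
  -- support function values on axis vectors
  have hν0 : suppFn K e₀ = 1 + α := by
    rw [hsupp e₀ he0, heinner]
    field_simp
  have hν1 : suppFn K e₁ = 1 - α / ((n:ℝ)-1) := by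
    rw [hsupp e₁ he1, h10]
    field_simp
    ring
  -- first family of inequalities
  have hQ1 : ∀ t : ℝ, 0 ≤ t → t ≤ 1 →
      0 ≤ α*(n:ℝ)*t^2 - (1+α)*((n:ℝ)-1)*t + ((n:ℝ)-1-α) := by
    intro t h0 h1
    set s' : ℝ := Real.sqrt (1 - t^2) with hs'
    have hs2 : s'^2 = 1 - t^2 := Real.sq_sqrt (by nlinarith)
    have hts : t^2 + s'^2 = 1 := by linarith
    have hts' : t^2 + (-s')^2 = 1 := by rw [neg_pow]; simp; linarith
    have hu := hnorm t s' hts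
    have hv := hnorm t (-s') hts'
    have hsum : (t • e₀ + s' • e₁) + (t • e₀ + (-s') • e₁) = (2*t) • e₀ := by
      module
    have hp := hpair _ _ e₀ (2*t) hu hv he0 hsum
    rw [hν0, hsupp _ hu, hsupp _ hv, hip t s', hip t (-s')] at hp
    have hkey : (1 + α*(((n:ℝ)*t^2-1)/((n:ℝ)-1)))*((n:ℝ)-1) = ((n:ℝ)-1) + α*((n:ℝ)*t^2-1) := by
      field_simp
    nlinarith [mul_le_mul_of_nonneg_right hp hn1.le, hkey]
  -- second family of inequalities
  have hQ2 : ∀ s : ℝ, 0 ≤ s → s ≤ 1 →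
      0 ≤ -α*(n:ℝ)*s^2 - ((n:ℝ)-1-α)*s + ((n:ℝ)-1-α+α*(n:ℝ)) := by
    intro s h0 h1
    set t' : ℝ := Real.sqrt (1 - s^2) with ht'
    have ht2 : t'^2 = 1 - s^2 := Real.sq_sqrt (by nlinarith)
    have hts : t'^2 + s^2 = 1 := by linarith
    have hts' : (-t')^2 + s^2 = 1 := by rw [neg_pow]; simp; linarith
    have hu := hnorm t' s hts
    have hv := hnorm (-t') s hts'
    have hsum : (t' • e₀ + s • e₁) + ((-t') • e₀ + s • e₁) = (2*s) • e₁ := by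
      module
    have hp := hpair _ _ e₁ (2*s) hu hv he1 hsum
    rw [hν1, hsupp _ hu, hsupp _ hv, hip t' s, hip (-t') s] at hp
    have hsq' : (-t')^2 = 1 - s^2 := by rw [neg_pow]; simp; linarith
    rw [hsq'] at hp
    rw [show t'^2 = 1 - s^2 from ht2] at hp
    have hkey : (1 + α*(((n:ℝ)*(1-s^2)-1)/((n:ℝ)-1)))*((n:ℝ)-1)
        = ((n:ℝ)-1) + α*((n:ℝ)*(1-s^2)-1) := by field_simp
    have hkey2 : (1 - α/((n:ℝ)-1))*((n:ℝ)-1) = ((n:ℝ)-1) - α := by field_simp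
    nlinarith [mul_le_mul_of_nonneg_right hp hn1.le, hkey, hkey2]
  -- extract the bounds
  have hbound2 : α*((n:ℝ)+1) ≤ (n:ℝ)-1 := by
    by_contra hcon
    push_neg at hcon
    have hα0 : 0 < α := by nlinarith
    set δ : ℝ := α*((n:ℝ)+1) - ((n:ℝ)-1) with hδ
    have hδ0 : 0 < δ := by rw [hδ]; linarith
    set ε : ℝ := min 1 (δ/(2*α*(n:ℝ))) with hε
    have hd0 : (0:ℝ) < 2*α*(n:ℝ) := by positivity
    have hεpos : 0 < ε := lt_min one_pos (div_pos hδ0 hd0)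
    have hε1 : ε ≤ 1 := min_le_left _ _
    have hε2 : ε*(2*α*(n:ℝ)) ≤ δ := by
      have h := min_le_right (1:ℝ) (δ/(2*α*(n:ℝ)))
      calc ε*(2*α*(n:ℝ)) ≤ (δ/(2*α*(n:ℝ)))*(2*α*(n:ℝ)) :=
            mul_le_mul_of_nonneg_right h hd0.le
        _ = δ := div_mul_cancel₀ _ (ne_of_gt hd0)
    have hQ := hQ1 (1-ε) (by linarith) (by linarith)
    nlinarith [hQ, mul_le_mul_of_nonneg_right hε2 hεpos.le, mul_pos hεpos hδ0]
  have hbound1 : -((n:ℝ)-1) ≤ α*(2*(n:ℝ)-1) := by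
    by_contra hcon
    push_neg at hcon
    have hα0 : α < 0 := by nlinarith
    set δ : ℝ := -(α*(2*(n:ℝ)-1)) - ((n:ℝ)-1) with hδ
    have hδ0 : 0 < δ := by rw [hδ]; linarith
    set ε : ℝ := min 1 (δ/(2*(-α)*(n:ℝ))) with hε
    have hd0 : (0:ℝ) < 2*(-α)*(n:ℝ) := by
      have : 0 < -α := by linarith
      positivity
    have hεpos : 0 < ε := lt_min one_pos (div_pos hδ0 hd0)
    have hε1 : ε ≤ 1 := min_le_left _ _
    have hε2 : ε*(2*(-α)*(n:ℝ)) ≤ δ := by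
      have h := min_le_right (1:ℝ) (δ/(2*(-α)*(n:ℝ)))
      calc ε*(2*(-α)*(n:ℝ)) ≤ (δ/(2*(-α)*(n:ℝ)))*(2*(-α)*(n:ℝ)) :=
            mul_le_mul_of_nonneg_right h hd0.le
        _ = δ := div_mul_cancel₀ _ (ne_of_gt hd0)
    have hQ := hQ2 (1-ε) (by linarith) (by linarith)
    nlinarith [hQ, mul_le_mul_of_nonneg_right hε2 hεpos.le, mul_pos hεpos hδ0]
  constructor
  · rw [div_le_iff₀ (by linarith : (0:ℝ) < 2*(n:ℝ)-1)]
    linarith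
  · rw [le_div_iff₀ (by linarith : (0:ℝ) < (n:ℝ)+1)]
    linarith

private theorem statement13_bwd (n : ℕ) (hn : 2 ≤ n) (e₀ : Euc n) (he0 : ‖e₀‖ = 1) (α : ℝ)
    (hα1 : -((n : ℝ) - 1) / (2 * (n : ℝ) - 1) ≤ α) (hα2 : α ≤ ((n : ℝ) - 1) / ((n : ℝ) + 1)) :
    (∃ K : Set (Euc n), IsCompact K ∧ Convex ℝ K ∧ K.Nonempty ∧
        (∀ g : (Euc n ≃ₗᵢ[ℝ] Euc n), g e₀ = e₀ → g '' K = K) ∧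
        ∀ u : Euc n, ‖u‖ = 1 →
          suppFn K u = 1 + α * (((n : ℝ) * (inner ℝ u e₀ : ℝ) ^ 2 - 1) / ((n : ℝ) - 1))) := by
  have hn2 : (2:ℝ) ≤ (n:ℝ) := by exact_mod_cast hn
  have hn1 : (0:ℝ) < (n:ℝ) - 1 := by linarith
  have hb1 : -((n:ℝ)-1) ≤ α*(2*(n:ℝ)-1) := by
    rw [div_le_iff₀ (by linarith : (0:ℝ) < 2*(n:ℝ)-1)] at hα1; linarith
  have hb2 : α*((n:ℝ)+1) ≤ (n:ℝ)-1 := by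
    rw [le_div_iff₀ (by linarith : (0:ℝ) < (n:ℝ)+1)] at hα2; linarith
  set nn : ℝ := (n:ℝ) with hnn
  set h : Euc n → ℝ := fun v => 1 + α * ((nn * (inner ℝ v e₀ : ℝ) ^ 2 - 1) / (nn - 1)) with hh
  have heinner : (inner ℝ e₀ e₀ : ℝ) = 1 := by
    rw [real_inner_self_eq_norm_sq, he0]; norm_num
  have hsq : ∀ v : Euc n, ‖v‖ = 1 → (inner ℝ v e₀ : ℝ)^2 ≤ 1 := by
    intro v hv
    have := abs_real_inner_le_norm v e₀
    rw [hv, he0] at this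
    nlinarith [abs_nonneg (inner ℝ v e₀ : ℝ), sq_abs (inner ℝ v e₀ : ℝ),
      sq_nonneg (|(inner ℝ v e₀ : ℝ)| - 1)]
  have hhval : ∀ v : Euc n, h v = ((nn-1-α) + nn*α*(inner ℝ v e₀ : ℝ)^2)/(nn-1) := by
    intro v; rw [hh]; field_simp
    ring
  have hh0 : ∀ v : Euc n, ‖v‖ = 1 → 0 ≤ h v := by
    intro v hv
    rw [hhval]
    apply div_nonneg _ hn1.le
    rcases le_or_gt 0 α with hc|hc
    · nlinarith [mul_nonneg (mul_nonneg (by linarith : (0:ℝ) ≤ nn) hc) (sq_nonneg (inner ℝ v e₀ : ℝ)),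
        mul_nonneg hc (by linarith : (0:ℝ) ≤ nn)]
    · nlinarith [hsq v hv, mul_nonneg (by linarith : (0:ℝ) ≤ 2*nn-2) (neg_nonneg.mpr hc.le),
        mul_nonneg (mul_nonneg (by linarith : (0:ℝ) ≤ nn) (neg_nonneg.mpr hc.le)) (by linarith [hsq v hv] : 0 ≤ 1 - (inner ℝ v e₀ : ℝ)^2)]
  have hh2 : ∀ v : Euc n, ‖v‖ = 1 → h v ≤ 2 := by
    intro v hv
    rw [hhval, div_le_iff₀ hn1]
    rcases le_or_gt 0 α with hc|hc
    · nlinarith [hsq v hv, mul_nonneg (mul_nonneg (by linarith : (0:ℝ) ≤ nn) hc) (by linarith [hsq v hv] : 0 ≤ 1 - (inner ℝ v e₀ : ℝ)^2),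
        mul_nonneg hc (by linarith : (0:ℝ) ≤ nn)]
    · nlinarith [mul_nonneg (mul_nonneg (by linarith : (0:ℝ) ≤ nn) (neg_nonneg.mpr hc.le)) (sq_nonneg (inner ℝ v e₀ : ℝ)),
        mul_nonneg (by linarith : (0:ℝ) ≤ 2*nn-2) (neg_nonneg.mpr hc.le)]
  set K : Set (Euc n) := {x | ∀ v : Euc n, ‖v‖ = 1 → (inner ℝ v x : ℝ) ≤ h v} with hK
  have hKclosed : IsClosed K := by
    have : K = ⋂ (v : Euc n), ⋂ (_ : ‖v‖ = 1), {x : Euc n | (inner ℝ v x : ℝ) ≤ h v} := by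
      ext x; simp [hK, Set.mem_iInter]
    rw [this]
    exact isClosed_iInter fun v => isClosed_iInter fun hv =>
      isClosed_le (continuous_const.inner continuous_id) continuous_const
  have hKball : K ⊆ closedBall 0 2 := by
    intro x hx
    rw [mem_closedBall, dist_zero_right]
    rcases eq_or_ne x 0 with rfl|hx0
    · simp
    · have hvx : ‖(‖x‖⁻¹ • x)‖ = 1 := by
        rw [norm_smul]; simp [norm_ne_zero_iff.mpr hx0]
      have h1 := hx _ hvx
      rw [real_inner_smul_left, real_inner_self_eq_norm_sq] at h1
      have h2 := hh2 _ hvx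
      have hxpos : 0 < ‖x‖ := norm_pos_iff.mpr hx0
      calc ‖x‖ = ‖x‖⁻¹ * ‖x‖^2 := by field_simp
        _ ≤ 2 := le_trans h1 h2
  have hKcomp : IsCompact K := (isCompact_closedBall (0:Euc n) 2).of_isClosed_subset hKclosed hKball
  have hKconv : Convex ℝ K := by
    intro x hx y hy a b ha hb hab v hv
    have h1 := hx v hv
    have h2 := hy v hv
    rw [inner_add_right, real_inner_smul_right, real_inner_smul_right]
    have h3 : a * h v + b * h v = h v := by rw [← add_mul, hab, one_mul]
    have h4 := mul_le_mul_of_nonneg_left h1 ha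
    have h5 := mul_le_mul_of_nonneg_left h2 hb
    linarith
  have hK0 : (0:Euc n) ∈ K := by
    intro v hv; rw [inner_zero_right]; exact hh0 v hv
  have hmem : ∀ (f : Euc n ≃ₗᵢ[ℝ] Euc n), f e₀ = e₀ → ∀ x ∈ K, f x ∈ K := by
    intro f hf x hx v hv
    have h1 : (inner ℝ v (f x) : ℝ) = inner ℝ (f.symm v) x := by
      conv_lhs => rw [← f.apply_symm_apply v]
      exact f.inner_map_map (f.symm v) x
    have h2 : (inner ℝ (f.symm v) e₀ : ℝ) = inner ℝ v e₀ := by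
      have h3 := f.inner_map_map (f.symm v) e₀
      rw [f.apply_symm_apply, hf] at h3
      exact h3.symm
    have h3 := hx (f.symm v) (by rw [f.symm.norm_map]; exact hv)
    rw [h1]
    refine le_trans h3 (le_of_eq ?_)
    rw [hh]; simp only [h2]
  have hKinv : ∀ (f : Euc n ≃ₗᵢ[ℝ] Euc n), f e₀ = e₀ → f '' K = K := by
    intro f hf
    ext x
    constructor
    · rintro ⟨y, hy, rfl⟩; exact hmem f hf y hy
    · intro hx
      refine ⟨f.symm x, ?_, f.apply_symm_apply x⟩
      have hsymm : f.symm e₀ = e₀ := by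
        conv_lhs => rw [← hf]
        exact f.symm_apply_apply e₀
      exact hmem f.symm hsymm x hx
  have hsupp : ∀ u : Euc n, ‖u‖ = 1 → suppFn K u = h u := by
    intro u hu
    set t : ℝ := (inner ℝ u e₀ : ℝ) with hT
    set P : Euc n := ((nn-1-α-nn*α*t^2)/(nn-1)) • u + ((2*nn*α*t)/(nn-1)) • e₀ with hP
    have ht2 : t^2 ≤ 1 := hsq u hu
    have hA : 0 ≤ nn-1-α-nn*α*t^2 := aux_coeff nn α t hn2 hb1 hb2 ht2
    have hPK : P ∈ K := by
      intro v hv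
      set s : ℝ := (inner ℝ v e₀ : ℝ) with hS
      have hs2 : s^2 ≤ 1 := hsq v hv
      set p' : ℝ := Real.sqrt (1 - t^2) with hp'
      set q' : ℝ := Real.sqrt (1 - s^2) with hq'
      have hp'2 : p'^2 = 1 - t^2 := Real.sq_sqrt (by linarith)
      have hq'2 : q'^2 = 1 - s^2 := Real.sq_sqrt (by linarith)
      have hnormu : ‖u - t • e₀‖ = p' := by
        rw [hp', show (1:ℝ) - t^2 = ‖u - t • e₀‖^2 by
          rw [norm_sub_sq_real, real_inner_smul_right, norm_smul, hu, ← hT]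
          simp only [Real.norm_eq_abs, he0, mul_one]
          rw [sq_abs]; ring]
        exact (Real.sqrt_sq (norm_nonneg _)).symm
      have hnormv : ‖v - s • e₀‖ = q' := by
        rw [hq', show (1:ℝ) - s^2 = ‖v - s • e₀‖^2 by
          rw [norm_sub_sq_real, real_inner_smul_right, norm_smul, hv, ← hS]
          simp only [Real.norm_eq_abs, he0, mul_one]
          rw [sq_abs]; ring]
        exact (Real.sqrt_sq (norm_nonneg _)).symm
      have hCS : (inner ℝ v u : ℝ) - s*t ≤ p'*q' := by
        have hcs := real_inner_le_norm (v - s • e₀) (u - t • e₀)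
        rw [hnormu, hnormv] at hcs
        have h1 : (inner ℝ v e₀ : ℝ) = s := hS.symm
        have h2 : (inner ℝ u e₀ : ℝ) = t := hT.symm
        have h3 : (inner ℝ e₀ u : ℝ) = t := by rw [real_inner_comm, h2]
        have hexp : (inner ℝ (v - s • e₀) (u - t • e₀) : ℝ)
            = (inner ℝ v u : ℝ) - s * t := by
          rw [inner_sub_left, inner_sub_right, inner_sub_right, real_inner_smul_left,
            real_inner_smul_left, real_inner_smul_right, real_inner_smul_right,
            heinner, h1, h3]
          ring
        rw [hexp, mul_comm q' p'] at hcs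
        exact hcs
      have hkey := aux_key nn α s t p' q' hb1 hb2 (by linarith) (by linarith)
      have hmul : (nn-1-α-nn*α*t^2) * (inner ℝ v u : ℝ) ≤ (nn-1-α-nn*α*t^2) * (s*t + p'*q') :=
        mul_le_mul_of_nonneg_left (by linarith) hA
      rw [hhval v, ← hS, le_div_iff₀ hn1]
      have hvP : (inner ℝ v P : ℝ) * (nn-1) = (nn-1-α-nn*α*t^2) * (inner ℝ v u:ℝ) + 2*nn*α*t*s := by
        rw [hP, inner_add_right, real_inner_smul_right, real_inner_smul_right, ← hS]
        field_simp
        all_goals ring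
      linarith
    have hPu : (inner ℝ u P : ℝ) = h u := by
      rw [hP, inner_add_right, real_inner_smul_right, real_inner_smul_right,
        real_inner_self_eq_norm_sq, hu, ← hT, hhval u, ← hT]
      field_simp
      all_goals ring
    have himg_bdd : ∀ y ∈ (fun x => (inner ℝ u x : ℝ)) '' K, y ≤ h u := by
      rintro y ⟨x, hx, rfl⟩; exact hx u hu
    apply le_antisymm
    · exact csSup_le ⟨_, Set.mem_image_of_mem _ hPK⟩ himg_bdd
    · exact le_csSup ⟨h u, himg_bdd⟩ ⟨P, hPK, hPu⟩
  exact ⟨K, hKcomp, hKconv, ⟨0, hK0⟩, hKinv, hsupp⟩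

/-- With P₂ⁿ(t) = (n t² - 1)/(n-1), the function
h_α(u) = 1 + α P₂ⁿ(⟨u,e₀⟩) on S^{n-1} is the support function of a convex body of
revolution (a nonempty compact convex set invariant under all rotations fixing e₀)
iff α ∈ [-(n-1)/(2n-1), (n-1)/(n+1)]. -/
theorem statement13 (n : ℕ) (hn : 2 ≤ n) (e₀ : Euc n) (he0 : ‖e₀‖ = 1) (α : ℝ) :
    (∃ K : Set (Euc n), IsCompact K ∧ Convex ℝ K ∧ K.Nonempty ∧
        (∀ g : Rot n, g.1 e₀ = e₀ → g.1 '' K = K) ∧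
        ∀ u : Euc n, ‖u‖ = 1 →
          suppFn K u = 1 + α * (((n : ℝ) * (inner ℝ u e₀ : ℝ) ^ 2 - 1) / ((n : ℝ) - 1))) ↔
      α ∈ Set.Icc (-((n : ℝ) - 1) / (2 * (n : ℝ) - 1)) (((n : ℝ) - 1) / ((n : ℝ) + 1)) := by
  constructor
  · rintro ⟨K, hKc, -, hKne, -, hsupp⟩
    exact statement13_fwd n hn e₀ he0 α K hKc hKne hsupp
  · rintro ⟨h1, h2⟩
    obtain ⟨K, hc, hconv, hne, hinv, hval⟩ := statement13_bwd n hn e₀ he0 α h1 h2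
    exact ⟨K, hc, hconv, hne, fun g hg => hinv g.1 hg, hval⟩

end
end
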